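/- arXiv:1707.03381 — 2 statements merged into one kernel-verified Lean document; each statement's English description precedes it below -/
import Mathlib

section
/- The element x²yz + xy²z + xyz² of the degree-4 homogeneous part of 𝔽₂[x,y,z] equals Sq¹(xyz) where Sq¹ is the 𝔽₂-derivation sending each variable v to v², and it is invariant under the action of GL(3,𝔽₂) modulo the GL(3,𝔽₂)-stable subspace spanned by {x⁴, y⁴, z⁴, x²y², x²z², y²z²}. -/
open MvPolynomial

private lemma sqZ2 : ∀ u : ZMod 2, u * u = u := by decide

private lemma twoZ : (2 : MvPolynomial (Fin 3) (ZMod 2)) = 0 := by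
  have h : (2 : MvPolynomial (Fin 3) (ZMod 2)) = C (2 : ZMod 2) := by
    rw [map_ofNat]
  rw [h, show (2 : ZMod 2) = 0 by decide, map_zero]

private lemma permZ : ∀ a b c d e f g h i : ZMod 2,
    a * e * i - a * f * h - b * d * i + b * f * g + c * d * h - c * e * g = 1 →
    a * e * i + a * f * h + b * d * i + b * f * g + c * d * h + c * e * g = 1 := by decide

private lemma Cmul_mem {g : MvPolynomial (Fin 3) (ZMod 2)} (r : ZMod 2)
    (hg : g ∈ Submodule.span (ZMod 2)
      ({X 0 ^ 4, X 1 ^ 4, X 2 ^ 4, X 0 ^ 2 * X 1 ^ 2, X 0 ^ 2 * X 2 ^ 2,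
        X 1 ^ 2 * X 2 ^ 2} : Set (MvPolynomial (Fin 3) (ZMod 2)))) :
    C r * g ∈ Submodule.span (ZMod 2)
      ({X 0 ^ 4, X 1 ^ 4, X 2 ^ 4, X 0 ^ 2 * X 1 ^ 2, X 0 ^ 2 * X 2 ^ 2,
        X 1 ^ 2 * X 2 ^ 2} : Set (MvPolynomial (Fin 3) (ZMod 2))) := by
  rw [← smul_eq_C_mul]
  exact Submodule.smul_mem _ _ hg

private lemma m0 : (X 0 ^ 4 : MvPolynomial (Fin 3) (ZMod 2)) ∈ Submodule.span (ZMod 2)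
      ({X 0 ^ 4, X 1 ^ 4, X 2 ^ 4, X 0 ^ 2 * X 1 ^ 2, X 0 ^ 2 * X 2 ^ 2,
        X 1 ^ 2 * X 2 ^ 2} : Set (MvPolynomial (Fin 3) (ZMod 2))) :=
  Submodule.subset_span (by simp only [Set.mem_insert_iff, Set.mem_singleton_iff]; tauto)

private lemma m1 : (X 1 ^ 4 : MvPolynomial (Fin 3) (ZMod 2)) ∈ Submodule.span (ZMod 2)
      ({X 0 ^ 4, X 1 ^ 4, X 2 ^ 4, X 0 ^ 2 * X 1 ^ 2, X 0 ^ 2 * X 2 ^ 2,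
        X 1 ^ 2 * X 2 ^ 2} : Set (MvPolynomial (Fin 3) (ZMod 2))) :=
  Submodule.subset_span (by simp only [Set.mem_insert_iff, Set.mem_singleton_iff]; tauto)

private lemma m2 : (X 2 ^ 4 : MvPolynomial (Fin 3) (ZMod 2)) ∈ Submodule.span (ZMod 2)
      ({X 0 ^ 4, X 1 ^ 4, X 2 ^ 4, X 0 ^ 2 * X 1 ^ 2, X 0 ^ 2 * X 2 ^ 2,
        X 1 ^ 2 * X 2 ^ 2} : Set (MvPolynomial (Fin 3) (ZMod 2))) :=
  Submodule.subset_span (by simp only [Set.mem_insert_iff, Set.mem_singleton_iff]; tauto)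

private lemma m3 : ((X 0 ^ 2 * X 1 ^ 2) : MvPolynomial (Fin 3) (ZMod 2)) ∈ Submodule.span (ZMod 2)
      ({X 0 ^ 4, X 1 ^ 4, X 2 ^ 4, X 0 ^ 2 * X 1 ^ 2, X 0 ^ 2 * X 2 ^ 2,
        X 1 ^ 2 * X 2 ^ 2} : Set (MvPolynomial (Fin 3) (ZMod 2))) :=
  Submodule.subset_span (by simp only [Set.mem_insert_iff, Set.mem_singleton_iff]; tauto)

private lemma m4 : ((X 0 ^ 2 * X 2 ^ 2) : MvPolynomial (Fin 3) (ZMod 2)) ∈ Submodule.span (ZMod 2)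
      ({X 0 ^ 4, X 1 ^ 4, X 2 ^ 4, X 0 ^ 2 * X 1 ^ 2, X 0 ^ 2 * X 2 ^ 2,
        X 1 ^ 2 * X 2 ^ 2} : Set (MvPolynomial (Fin 3) (ZMod 2))) :=
  Submodule.subset_span (by simp only [Set.mem_insert_iff, Set.mem_singleton_iff]; tauto)

private lemma m5 : ((X 1 ^ 2 * X 2 ^ 2) : MvPolynomial (Fin 3) (ZMod 2)) ∈ Submodule.span (ZMod 2)
      ({X 0 ^ 4, X 1 ^ 4, X 2 ^ 4, X 0 ^ 2 * X 1 ^ 2, X 0 ^ 2 * X 2 ^ 2,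
        X 1 ^ 2 * X 2 ^ 2} : Set (MvPolynomial (Fin 3) (ZMod 2))) :=
  Submodule.subset_span (by simp only [Set.mem_insert_iff, Set.mem_singleton_iff]; tauto)

set_option maxHeartbeats 1000000

private lemma lemA (a b c : ZMod 2) :
    ((C a * X 0 + C b * X 1 + C c * X 2 : MvPolynomial (Fin 3) (ZMod 2)) ^ 4) ∈ Submodule.span (ZMod 2)
      ({X 0 ^ 4, X 1 ^ 4, X 2 ^ 4, X 0 ^ 2 * X 1 ^ 2, X 0 ^ 2 * X 2 ^ 2,
        X 1 ^ 2 * X 2 ^ 2} : Set (MvPolynomial (Fin 3) (ZMod 2))) := by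
  have htwo := twoZ
  have ha : (C a : MvPolynomial (Fin 3) (ZMod 2)) * C a = C a := by
    rw [← map_mul, sqZ2]
  have hb : (C b : MvPolynomial (Fin 3) (ZMod 2)) * C b = C b := by
    rw [← map_mul, sqZ2]
  have hc : (C c : MvPolynomial (Fin 3) (ZMod 2)) * C c = C c := by
    rw [← map_mul, sqZ2]
  have key : ((C a * X 0 + C b * X 1 + C c * X 2 : MvPolynomial (Fin 3) (ZMod 2)) ^ 4) =
      C (a) * X 0 ^ 4 + C (b) * X 1 ^ 4 + C (c) * X 2 ^ 4 := by
    try simp only [map_add, map_mul]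
    linear_combination ((X 0)^4 + 4*(C c)*(X 0)^3*(X 2) + 6*(C c)^2*(X 0)^2*(X 2)^2 + 4*(C b)*(X 0)^3*(X 1) + 12*(C b)*(C c)*(X 0)^2*(X 1)*(X 2) + 6*(C b)^2*(X 0)^2*(X 1)^2 + (C a)*(X 0)^4 + 4*(C a)*(C c)*(X 0)^3*(X 2) + 4*(C a)*(C b)*(X 0)^3*(X 1) + (C a)^2*(X 0)^4) * ha +
      ((X 1)^4 + 4*(C c)*(X 1)^3*(X 2) + 6*(C c)^2*(X 1)^2*(X 2)^2 + (C b)*(X 1)^4 + 4*(C b)*(C c)*(X 1)^3*(X 2) + (C b)^2*(X 1)^4 + 4*(C a)*(X 0)*(X 1)^3 + 6*(C a)*(X 0)^2*(X 1)^2 + 12*(C a)*(C c)*(X 0)*(X 1)^2*(X 2) + 4*(C a)*(C b)*(X 0)*(X 1)^3) * hb +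
      ((X 2)^4 + (C c)*(X 2)^4 + (C c)^2*(X 2)^4 + 4*(C b)*(X 1)*(X 2)^3 + 6*(C b)*(X 1)^2*(X 2)^2 + 4*(C b)*(C c)*(X 1)*(X 2)^3 + 4*(C a)*(X 0)*(X 2)^3 + 6*(C a)*(X 0)^2*(X 2)^2 + 4*(C a)*(C c)*(X 0)*(X 2)^3 + 12*(C a)*(C b)*(X 0)*(X 1)*(X 2)^2) * hc +
      (2*(C b)*(C c)*(X 1)*(X 2)^3 + 3*(C b)*(C c)*(X 1)^2*(X 2)^2 + 2*(C b)*(C c)*(X 1)^3*(X 2) + 2*(C a)*(C c)*(X 0)*(X 2)^3 + 3*(C a)*(C c)*(X 0)^2*(X 2)^2 + 2*(C a)*(C c)*(X 0)^3*(X 2) + 2*(C a)*(C b)*(X 0)*(X 1)^3 + 3*(C a)*(C b)*(X 0)^2*(X 1)^2 + 2*(C a)*(C b)*(X 0)^3*(X 1) + 6*(C a)*(C b)*(C c)*(X 0)*(X 1)*(X 2)^2 + 6*(C a)*(C b)*(C c)*(X 0)*(X 1)^2*(X 2) + 6*(C a)*(C b)*(C c)*(X 0)^2*(X 1)*(X 2))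 * htwo
  rw [key]
  refine add_mem (add_mem (?_) ?_) ?_
  · exact Cmul_mem _ m0
  · exact Cmul_mem _ m1
  · exact Cmul_mem _ m2

private lemma lemB (a b c d e f : ZMod 2) :
    ((C a * X 0 + C b * X 1 + C c * X 2 : MvPolynomial (Fin 3) (ZMod 2)) ^ 2 *
      (C d * X 0 + C e * X 1 + C f * X 2) ^ 2) ∈ Submodule.span (ZMod 2)
      ({X 0 ^ 4, X 1 ^ 4, X 2 ^ 4, X 0 ^ 2 * X 1 ^ 2, X 0 ^ 2 * X 2 ^ 2,
        X 1 ^ 2 * X 2 ^ 2} : Set (MvPolynomial (Fin 3) (ZMod 2))) := by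
  have htwo := twoZ
  have ha : (C a : MvPolynomial (Fin 3) (ZMod 2)) * C a = C a := by
    rw [← map_mul, sqZ2]
  have hb : (C b : MvPolynomial (Fin 3) (ZMod 2)) * C b = C b := by
    rw [← map_mul, sqZ2]
  have hc : (C c : MvPolynomial (Fin 3) (ZMod 2)) * C c = C c := by
    rw [← map_mul, sqZ2]
  have hd : (C d : MvPolynomial (Fin 3) (ZMod 2)) * C d = C d := by
    rw [← map_mul, sqZ2]
  have he : (C e : MvPolynomial (Fin 3) (ZMod 2)) * C e = C e := by
    rw [← map_mul, sqZ2]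
  have hf : (C f : MvPolynomial (Fin 3) (ZMod 2)) * C f = C f := by
    rw [← map_mul, sqZ2]
  have key : ((C a * X 0 + C b * X 1 + C c * X 2 : MvPolynomial (Fin 3) (ZMod 2)) ^ 2 *
      (C d * X 0 + C e * X 1 + C f * X 2) ^ 2) =
      C (a*d) * X 0 ^ 4 + C (b*e) * X 1 ^ 4 + C (c*f) * X 2 ^ 4 + C (a*e + b*d) * (X 0 ^ 2 * X 1 ^ 2) + C (a*f + c*d) * (X 0 ^ 2 * X 2 ^ 2) + C (b*f + c*e) * (X 1 ^ 2 * X 2 ^ 2) := by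
    try simp only [map_add, map_mul]
    linear_combination ((C f)^2*(X 0)^2*(X 2)^2 + 2*(C e)*(C f)*(X 0)^2*(X 1)*(X 2) + (C e)^2*(X 0)^2*(X 1)^2 + 2*(C d)*(C f)*(X 0)^3*(X 2) + 2*(C d)*(C e)*(X 0)^3*(X 1) + (C d)^2*(X 0)^4) * ha +
      ((C f)^2*(X 1)^2*(X 2)^2 + 2*(C e)*(C f)*(X 1)^3*(X 2) + (C e)^2*(X 1)^4 + 2*(C d)*(C f)*(X 0)*(X 1)^2*(X 2) + 2*(C d)*(C e)*(X 0)*(X 1)^3 + (C d)^2*(X 0)^2*(X 1)^2) * hb +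
      ((C f)^2*(X 2)^4 + 2*(C e)*(C f)*(X 1)*(X 2)^3 + (C e)^2*(X 1)^2*(X 2)^2 + 2*(C d)*(C f)*(X 0)*(X 2)^3 + 2*(C d)*(C e)*(X 0)*(X 1)*(X 2)^2 + (C d)^2*(X 0)^2*(X 2)^2) * hc +
      ((C c)*(X 0)^2*(X 2)^2 + (C b)*(X 0)^2*(X 1)^2 + 2*(C b)*(C c)*(X 0)^2*(X 1)*(X 2) + (C a)*(X 0)^4 + 2*(C a)*(C c)*(X 0)^3*(X 2) + 2*(C a)*(C b)*(X 0)^3*(X 1)) * hd +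
      ((C c)*(X 1)^2*(X 2)^2 + (C b)*(X 1)^4 + 2*(C b)*(C c)*(X 1)^3*(X 2) + (C a)*(X 0)^2*(X 1)^2 + 2*(C a)*(C c)*(X 0)*(X 1)^2*(X 2) + 2*(C a)*(C b)*(X 0)*(X 1)^3) * he +
      ((C c)*(X 2)^4 + (C b)*(X 1)^2*(X 2)^2 + 2*(C b)*(C c)*(X 1)*(X 2)^3 + (C a)*(X 0)^2*(X 2)^2 + 2*(C a)*(C c)*(X 0)*(X 2)^3 + 2*(C a)*(C b)*(X 0)*(X 1)*(X 2)^2) * hf +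
      ((C c)*(C e)*(C f)*(X 1)*(X 2)^3 + (C c)*(C d)*(C f)*(X 0)*(X 2)^3 + (C c)*(C d)*(C e)*(X 0)*(X 1)*(X 2)^2 + (C b)*(C e)*(C f)*(X 1)^3*(X 2) + (C b)*(C d)*(C f)*(X 0)*(X 1)^2*(X 2) + (C b)*(C d)*(C e)*(X 0)*(X 1)^3 + (C b)*(C c)*(C f)*(X 1)*(X 2)^3 + (C b)*(C c)*(C e)*(X 1)^3*(X 2) + 2*(C b)*(C c)*(C e)*(C f)*(X 1)^2*(X 2)^2 + (C b)*(C c)*(C d)*(X 0)^2*(X 1)*(X 2) + 2*(C b)*(C c)*(C d)*(C f)*(X 0)*(X 1)*(X 2)^2 + 2*(C b)*(C c)*(C d)*(C e)*(X 0)*(X 1)^2*(X 2) + (C a)*(C e)*(C f)*(X 0)^2*(X 1)*(X 2) + (C a)*(C d)*(C f)*(X 0)^3*(X 2) + (C a)*(C d)*(C e)*(X 0)^3*(X 1) + (C a)*(C c)*(C f)*(X 0)*(X 2)^3 + (C a)*(C c)*(C e)*(X 0)*(X 1)^2*(X 2) + 2*(C a)*(C c)*(C e)*(C f)*(X 0)*(X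 1)*(X 2)^2 + (C a)*(C c)*(C d)*(X 0)^3*(X 2) + 2*(C a)*(C c)*(C d)*(C f)*(X 0)^2*(X 2)^2 + 2*(C a)*(C c)*(C d)*(C e)*(X 0)^2*(X 1)*(X 2) + (C a)*(C b)*(C f)*(X 0)*(X 1)*(X 2)^2 + (C a)*(C b)*(C e)*(X 0)*(X 1)^3 + 2*(C a)*(C b)*(C e)*(C f)*(X 0)*(X 1)^2*(X 2) + (C a)*(C b)*(C d)*(X 0)^3*(X 1) + 2*(C a)*(C b)*(C d)*(C f)*(X 0)^2*(X 1)*(X 2) + 2*(C a)*(C b)*(C d)*(C e)*(X 0)^2*(X 1)^2) * htwo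
  rw [key]
  refine add_mem (add_mem (add_mem (add_mem (add_mem (?_) ?_) ?_) ?_) ?_) ?_
  · exact Cmul_mem _ m0
  · exact Cmul_mem _ m1
  · exact Cmul_mem _ m2
  · exact Cmul_mem _ m3
  · exact Cmul_mem _ m4
  · exact Cmul_mem _ m5

private lemma lem3 (a b c d e f g h i : ZMod 2)
    (hp : a * e * i + a * f * h + b * d * i + b * f * g + c * d * h + c * e * g = 1) :
    ((C a * X 0 + C b * X 1 + C c * X 2 : MvPolynomial (Fin 3) (ZMod 2)) ^ 2 *
        (C d * X 0 + C e * X 1 + C f * X 2) * (C g * X 0 + C h * X 1 + C i * X 2) +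
      (C a * X 0 + C b * X 1 + C c * X 2) * (C d * X 0 + C e * X 1 + C f * X 2) ^ 2 *
        (C g * X 0 + C h * X 1 + C i * X 2) +
      (C a * X 0 + C b * X 1 + C c * X 2) * (C d * X 0 + C e * X 1 + C f * X 2) *
        (C g * X 0 + C h * X 1 + C i * X 2) ^ 2 -
      (X 0 ^ 2 * X 1 * X 2 + X 0 * X 1 ^ 2 * X 2 + X 0 * X 1 * X 2 ^ 2)) ∈ Submodule.span (ZMod 2)
      ({X 0 ^ 4, X 1 ^ 4, X 2 ^ 4, X 0 ^ 2 * X 1 ^ 2, X 0 ^ 2 * X 2 ^ 2,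
        X 1 ^ 2 * X 2 ^ 2} : Set (MvPolynomial (Fin 3) (ZMod 2))) := by
  have htwo := twoZ
  have ha : (C a : MvPolynomial (Fin 3) (ZMod 2)) * C a = C a := by
    rw [← map_mul, sqZ2]
  have hb : (C b : MvPolynomial (Fin 3) (ZMod 2)) * C b = C b := by
    rw [← map_mul, sqZ2]
  have hc : (C c : MvPolynomial (Fin 3) (ZMod 2)) * C c = C c := by
    rw [← map_mul, sqZ2]
  have hd : (C d : MvPolynomial (Fin 3) (ZMod 2)) * C d = C d := by
    rw [← map_mul, sqZ2]
  have he : (C e : MvPolynomial (Fin 3) (ZMod 2)) * C e = C e := by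
    rw [← map_mul, sqZ2]
  have hf : (C f : MvPolynomial (Fin 3) (ZMod 2)) * C f = C f := by
    rw [← map_mul, sqZ2]
  have hg : (C g : MvPolynomial (Fin 3) (ZMod 2)) * C g = C g := by
    rw [← map_mul, sqZ2]
  have hh : (C h : MvPolynomial (Fin 3) (ZMod 2)) * C h = C h := by
    rw [← map_mul, sqZ2]
  have hi : (C i : MvPolynomial (Fin 3) (ZMod 2)) * C i = C i := by
    rw [← map_mul, sqZ2]
  have hperm : (C a * C e * C i + C a * C f * C h + C b * C d * C i + C b * C f * C g +
      C c * C d * C h + C c * C e * C g : MvPolynomial (Fin 3) (ZMod 2)) = 1 := by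
    rw [← map_mul, ← map_mul, ← map_mul, ← map_mul, ← map_mul, ← map_mul, ← map_mul,
      ← map_mul, ← map_mul, ← map_mul, ← map_mul, ← map_mul, ← map_add, ← map_add,
      ← map_add, ← map_add, ← map_add, hp, map_one]
  have key : ((C a * X 0 + C b * X 1 + C c * X 2 : MvPolynomial (Fin 3) (ZMod 2)) ^ 2 *
        (C d * X 0 + C e * X 1 + C f * X 2) * (C g * X 0 + C h * X 1 + C i * X 2) +
      (C a * X 0 + C b * X 1 + C c * X 2) * (C d * X 0 + C e * X 1 + C f * X 2) ^ 2 *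
        (C g * X 0 + C h * X 1 + C i * X 2) +
      (C a * X 0 + C b * X 1 + C c * X 2) * (C d * X 0 + C e * X 1 + C f * X 2) *
        (C g * X 0 + C h * X 1 + C i * X 2) ^ 2 -
      (X 0 ^ 2 * X 1 * X 2 + X 0 * X 1 ^ 2 * X 2 + X 0 * X 1 * X 2 ^ 2)) =
      C (a*d*g) * X 0 ^ 4 + C (b*e*h) * X 1 ^ 4 + C (c*f*i) * X 2 ^ 4 + C (a*d*h + a*e*g + a*e*h + b*d*g + b*d*h + b*e*g) * (X 0 ^ 2 * X 1 ^ 2) + C (a*d*i + a*f*g + a*f*i + c*d*g + c*d*i + c*f*g) * (X 0 ^ 2 * X 2 ^ 2) + C (b*e*i + b*f*h + b*f*i + c*e*h + c*e*i + c*f*h) * (X 1 ^ 2 * X 2 ^ 2) := by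
    try simp only [map_add, map_mul]
    linear_combination ((C f)*(C i)*(X 0)^2*(X 2)^2 + (C f)*(C h)*(X 0)^2*(X 1)*(X 2) + (C f)*(C g)*(X 0)^3*(X 2) + (C e)*(C i)*(X 0)^2*(X 1)*(X 2) + (C e)*(C h)*(X 0)^2*(X 1)^2 + (C e)*(C g)*(X 0)^3*(X 1) + (C d)*(C i)*(X 0)^3*(X 2) + (C d)*(C h)*(X 0)^3*(X 1) + (C d)*(C g)*(X 0)^4) * ha +
      ((C f)*(C i)*(X 1)^2*(X 2)^2 + (C f)*(C h)*(X 1)^3*(X 2) + (C f)*(C g)*(X 0)*(X 1)^2*(X 2) + (C e)*(C i)*(X 1)^3*(X 2) + (C e)*(C h)*(X 1)^4 + (C e)*(C g)*(X 0)*(X 1)^3 + (C d)*(C i)*(X 0)*(X 1)^2*(X 2) + (C d)*(C h)*(X 0)*(X 1)^3 + (C d)*(C g)*(X 0)^2*(X 1)^2) * hb +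
      ((C f)*(C i)*(X 2)^4 + (C f)*(C h)*(X 1)*(X 2)^3 + (C f)*(C g)*(X 0)*(X 2)^3 + (C e)*(C i)*(X 1)*(X 2)^3 + (C e)*(C h)*(X 1)^2*(X 2)^2 + (C e)*(C g)*(X 0)*(X 1)*(X 2)^2 + (C d)*(C i)*(X 0)*(X 2)^3 + (C d)*(C h)*(X 0)*(X 1)*(X 2)^2 + (C d)*(C g)*(X 0)^2*(X 2)^2) * hc +
      ((C c)*(C i)*(X 0)^2*(X 2)^2 + (C c)*(C h)*(X 0)^2*(X 1)*(X 2) + (C c)*(C g)*(X 0)^3*(X 2) + (C b)*(C i)*(X 0)^2*(X 1)*(X 2) + (C b)*(C h)*(X 0)^2*(X 1)^2 + (C b)*(C g)*(X 0)^3*(X 1) + (C a)*(C i)*(X 0)^3*(X 2) + (C a)*(C h)*(X 0)^3*(X 1) + (C a)*(C g)*(X 0)^4) * hd +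
      ((C c)*(C i)*(X 1)^2*(X 2)^2 + (C c)*(C h)*(X 1)^3*(X 2) + (C c)*(C g)*(X 0)*(X 1)^2*(X 2) + (C b)*(C i)*(X 1)^3*(X 2) + (C b)*(C h)*(X 1)^4 + (C b)*(C g)*(X 0)*(X 1)^3 + (C a)*(C i)*(X 0)*(X 1)^2*(X 2) + (C a)*(C h)*(X 0)*(X 1)^3 + (C a)*(C g)*(X 0)^2*(X 1)^2) * he +
      ((C c)*(C i)*(X 2)^4 + (C c)*(C h)*(X 1)*(X 2)^3 + (C c)*(C g)*(X 0)*(X 2)^3 + (C b)*(C i)*(X 1)*(X 2)^3 + (C b)*(C h)*(X 1)^2*(X 2)^2 + (C b)*(C g)*(X 0)*(X 1)*(X 2)^2 + (C a)*(C i)*(X 0)*(X 2)^3 + (C a)*(C h)*(X 0)*(X 1)*(X 2)^2 + (C a)*(C g)*(X 0)^2*(X 2)^2) * hf +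
      ((C c)*(C f)*(X 0)^2*(X 2)^2 + (C c)*(C e)*(X 0)^2*(X 1)*(X 2) + (C c)*(C d)*(X 0)^3*(X 2) + (C b)*(C f)*(X 0)^2*(X 1)*(X 2) + (C b)*(C e)*(X 0)^2*(X 1)^2 + (C b)*(C d)*(X 0)^3*(X 1) + (C a)*(C f)*(X 0)^3*(X 2) + (C a)*(C e)*(X 0)^3*(X 1) + (C a)*(C d)*(X 0)^4) * hg +
      ((C c)*(C f)*(X 1)^2*(X 2)^2 + (C c)*(C e)*(X 1)^3*(X 2) + (C c)*(C d)*(X 0)*(X 1)^2*(X 2) + (C b)*(C f)*(X 1)^3*(X 2) + (C b)*(C e)*(X 1)^4 + (C b)*(C d)*(X 0)*(X 1)^3 + (C a)*(C f)*(X 0)*(X 1)^2*(X 2) + (C a)*(C e)*(X 0)*(X 1)^3 + (C a)*(C d)*(X 0)^2*(X 1)^2) * hh +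
      ((C c)*(C f)*(X 2)^4 + (C c)*(C e)*(X 1)*(X 2)^3 + (C c)*(C d)*(X 0)*(X 2)^3 + (C b)*(C f)*(X 1)*(X 2)^3 + (C b)*(C e)*(X 1)^2*(X 2)^2 + (C b)*(C d)*(X 0)*(X 1)*(X 2)^2 + (C a)*(C f)*(X 0)*(X 2)^3 + (C a)*(C e)*(X 0)*(X 1)*(X 2)^2 + (C a)*(C d)*(X 0)^2*(X 2)^2) * hi +
      ((C c)*(C f)*(C i)*(X 2)^4 + (C c)*(C f)*(C h)*(X 1)*(X 2)^3 + (C c)*(C f)*(C h)*(C i)*(X 1)*(X 2)^3 + (C c)*(C f)*(C g)*(X 0)*(X 2)^3 + (C c)*(C f)*(C g)*(C i)*(X 0)*(X 2)^3 + (C c)*(C f)*(C g)*(C h)*(X 0)*(X 1)*(X 2)^2 + (C c)*(C e)*(C i)*(X 1)*(X 2)^3 + (C c)*(C e)*(C h)*(X 1)^3*(X 2) + (C c)*(C e)*(C h)*(C i)*(X 1)^2*(X 2)^2 + (C c)*(C e)*(C g)*(C i)*(X 0)*(X 1)*(X 2)^2 + (C c)*(C e)*(C g)*(C h)*(X 0)*(X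 1)^2*(X 2) + (C c)*(C e)*(C f)*(C i)*(X 1)*(X 2)^3 + (C c)*(C e)*(C f)*(C h)*(X 1)^2*(X 2)^2 + (C c)*(C e)*(C f)*(C g)*(X 0)*(X 1)*(X 2)^2 + (C c)*(C d)*(C i)*(X 0)*(X 2)^3 + (C c)*(C d)*(C h)*(C i)*(X 0)*(X 1)*(X 2)^2 + (C c)*(C d)*(C g)*(X 0)^3*(X 2) + (C c)*(C d)*(C g)*(C i)*(X 0)^2*(X 2)^2 + (C c)*(C d)*(C g)*(C h)*(X 0)^2*(X 1)*(X 2) + (C c)*(C d)*(C f)*(C i)*(X 0)*(X 2)^3 + (C c)*(C d)*(C f)*(C h)*(X 0)*(X 1)*(X 2)^2 + (C c)*(C d)*(C f)*(C g)*(X 0)^2*(X 2)^2 + (C c)*(C d)*(C e)*(C i)*(X 0)*(X 1)*(X 2)^2 + (C c)*(C d)*(C e)*(C h)*(X 0)*(X 1)^2*(X 2) + (C c)*(C d)*(C e)*(C g)*(X 0)^2*(X 1)*(X 2) + (C b)*(C f)*(C i)*(X 1)*(X 2)^3 + (C b)*(C f)*(C h)*(X 1)^3*(X 2) + (C b)*(C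 f)*(C h)*(C i)*(X 1)^2*(X 2)^2 + (C b)*(C f)*(C g)*(C i)*(X 0)*(X 1)*(X 2)^2 + (C b)*(C f)*(C g)*(C h)*(X 0)*(X 1)^2*(X 2) + (C b)*(C e)*(C i)*(X 1)^3*(X 2) + (C b)*(C e)*(C h)*(X 1)^4 + (C b)*(C e)*(C h)*(C i)*(X 1)^3*(X 2) + (C b)*(C e)*(C g)*(X 0)*(X 1)^3 + (C b)*(C e)*(C g)*(C i)*(X 0)*(X 1)^2*(X 2) + (C b)*(C e)*(C g)*(C h)*(X 0)*(X 1)^3 + (C b)*(C e)*(C f)*(C i)*(X 1)^2*(X 2)^2 + (C b)*(C e)*(C f)*(C h)*(X 1)^3*(X 2) + (C b)*(C e)*(C f)*(C g)*(X 0)*(X 1)^2*(X 2) + (C b)*(C d)*(C h)*(X 0)*(X 1)^3 + (C b)*(C d)*(C h)*(C i)*(X 0)*(X 1)^2*(X 2) + (C b)*(C d)*(C g)*(X 0)^3*(X 1) + (C b)*(C d)*(C g)*(C i)*(X 0)^2*(X 1)*(X 2) + (C b)*(C d)*(C g)*(C h)*(X 0)^2*(X 1)^2 + (C b)*(C d)*(C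 f)*(C i)*(X 0)*(X 1)*(X 2)^2 + (C b)*(C d)*(C f)*(C h)*(X 0)*(X 1)^2*(X 2) + (C b)*(C d)*(C f)*(C g)*(X 0)^2*(X 1)*(X 2) + (C b)*(C d)*(C e)*(C i)*(X 0)*(X 1)^2*(X 2) + (C b)*(C d)*(C e)*(C h)*(X 0)*(X 1)^3 + (C b)*(C d)*(C e)*(C g)*(X 0)^2*(X 1)^2 + (C b)*(C c)*(C f)*(C i)*(X 1)*(X 2)^3 + (C b)*(C c)*(C f)*(C h)*(X 1)^2*(X 2)^2 + (C b)*(C c)*(C f)*(C g)*(X 0)*(X 1)*(X 2)^2 + (C b)*(C c)*(C e)*(C i)*(X 1)^2*(X 2)^2 + (C b)*(C c)*(C e)*(C h)*(X 1)^3*(X 2) + (C b)*(C c)*(C e)*(C g)*(X 0)*(X 1)^2*(X 2) + (C b)*(C c)*(C d)*(C i)*(X 0)*(X 1)*(X 2)^2 + (C b)*(C c)*(C d)*(C h)*(X 0)*(X 1)^2*(X 2) + (C b)*(C c)*(C d)*(C g)*(X 0)^2*(X 1)*(X 2) + (C a)*(C f)*(C i)*(X 0)*(X 2)^3 + (C a)*(C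 f)*(C h)*(C i)*(X 0)*(X 1)*(X 2)^2 + (C a)*(C f)*(C g)*(X 0)^3*(X 2) + (C a)*(C f)*(C g)*(C i)*(X 0)^2*(X 2)^2 + (C a)*(C f)*(C g)*(C h)*(X 0)^2*(X 1)*(X 2) + (C a)*(C e)*(C h)*(X 0)*(X 1)^3 + (C a)*(C e)*(C h)*(C i)*(X 0)*(X 1)^2*(X 2) + (C a)*(C e)*(C g)*(X 0)^3*(X 1) + (C a)*(C e)*(C g)*(C i)*(X 0)^2*(X 1)*(X 2) + (C a)*(C e)*(C g)*(C h)*(X 0)^2*(X 1)^2 + (C a)*(C e)*(C f)*(C i)*(X 0)*(X 1)*(X 2)^2 + (C a)*(C e)*(C f)*(C h)*(X 0)*(X 1)^2*(X 2) + (C a)*(C e)*(C f)*(C g)*(X 0)^2*(X 1)*(X 2) + (C a)*(C d)*(C i)*(X 0)^3*(X 2) + (C a)*(C d)*(C h)*(X 0)^3*(X 1) + (C a)*(C d)*(C h)*(C i)*(X 0)^2*(X 1)*(X 2) + (C a)*(C d)*(C g)*(X 0)^4 + (C a)*(C d)*(C g)*(C i)*(X 0)^3*(X 2) + (C a)*(C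 d)*(C g)*(C h)*(X 0)^3*(X 1) + (C a)*(C d)*(C f)*(C i)*(X 0)^2*(X 2)^2 + (C a)*(C d)*(C f)*(C h)*(X 0)^2*(X 1)*(X 2) + (C a)*(C d)*(C f)*(C g)*(X 0)^3*(X 2) + (C a)*(C d)*(C e)*(C i)*(X 0)^2*(X 1)*(X 2) + (C a)*(C d)*(C e)*(C h)*(X 0)^2*(X 1)^2 + (C a)*(C d)*(C e)*(C g)*(X 0)^3*(X 1) + (C a)*(C c)*(C f)*(C i)*(X 0)*(X 2)^3 + (C a)*(C c)*(C f)*(C h)*(X 0)*(X 1)*(X 2)^2 + (C a)*(C c)*(C f)*(C g)*(X 0)^2*(X 2)^2 + (C a)*(C c)*(C e)*(C i)*(X 0)*(X 1)*(X 2)^2 + (C a)*(C c)*(C e)*(C h)*(X 0)*(X 1)^2*(X 2) + (C a)*(C c)*(C e)*(C g)*(X 0)^2*(X 1)*(X 2) + (C a)*(C c)*(C d)*(C i)*(X 0)^2*(X 2)^2 + (C a)*(C c)*(C d)*(C h)*(X 0)^2*(X 1)*(X 2) + (C a)*(C c)*(C d)*(C g)*(X 0)^3*(X 2) + (C a)*(C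 b)*(C f)*(C i)*(X 0)*(X 1)*(X 2)^2 + (C a)*(C b)*(C f)*(C h)*(X 0)*(X 1)^2*(X 2) + (C a)*(C b)*(C f)*(C g)*(X 0)^2*(X 1)*(X 2) + (C a)*(C b)*(C e)*(C i)*(X 0)*(X 1)^2*(X 2) + (C a)*(C b)*(C e)*(C h)*(X 0)*(X 1)^3 + (C a)*(C b)*(C e)*(C g)*(X 0)^2*(X 1)^2 + (C a)*(C b)*(C d)*(C i)*(X 0)^2*(X 1)*(X 2) + (C a)*(C b)*(C d)*(C h)*(X 0)^2*(X 1)^2 + (C a)*(C b)*(C d)*(C g)*(X 0)^3*(X 1)) * htwo +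
      ((X 0)*(X 1)*(X 2)^2 + (X 0)*(X 1)^2*(X 2) + (X 0)^2*(X 1)*(X 2)) * hperm
  rw [key]
  refine add_mem (add_mem (add_mem (add_mem (add_mem (?_) ?_) ?_) ?_) ?_) ?_
  · exact Cmul_mem _ m0
  · exact Cmul_mem _ m1
  · exact Cmul_mem _ m2
  · exact Cmul_mem _ m3
  · exact Cmul_mem _ m4
  · exact Cmul_mem _ m5


/-- In 𝔽₂[x,y,z], the element x²yz + xy²z + xyz² equals Sq¹(xyz) for the derivation Sq¹
sending each variable v to v², and it is invariant under the linear-substitution action of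
GL(3,𝔽₂) modulo the GL(3,𝔽₂)-stable subspace spanned by {x⁴, y⁴, z⁴, x²y², x²z², y²z²}. -/
theorem sq1_xyz_invariant :
    (∀ D : Derivation (ZMod 2) (MvPolynomial (Fin 3) (ZMod 2))
        (MvPolynomial (Fin 3) (ZMod 2)),
      (∀ i : Fin 3, D (X i) = X i ^ 2) →
      D (X 0 * X 1 * X 2) =
        X 0 ^ 2 * X 1 * X 2 + X 0 * X 1 ^ 2 * X 2 + X 0 * X 1 * X 2 ^ 2) ∧
    (∀ M : GL (Fin 3) (ZMod 2), ∀ p ∈ Submodule.span (ZMod 2)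
        ({X 0 ^ 4, X 1 ^ 4, X 2 ^ 4, X 0 ^ 2 * X 1 ^ 2, X 0 ^ 2 * X 2 ^ 2,
          X 1 ^ 2 * X 2 ^ 2} : Set (MvPolynomial (Fin 3) (ZMod 2))),
      aeval (R := ZMod 2) (fun i : Fin 3 =>
          ∑ j : Fin 3, C ((M : Matrix (Fin 3) (Fin 3) (ZMod 2)) i j) * X j) p ∈
        Submodule.span (ZMod 2)
        ({X 0 ^ 4, X 1 ^ 4, X 2 ^ 4, X 0 ^ 2 * X 1 ^ 2, X 0 ^ 2 * X 2 ^ 2,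
          X 1 ^ 2 * X 2 ^ 2} : Set (MvPolynomial (Fin 3) (ZMod 2)))) ∧
    (∀ M : GL (Fin 3) (ZMod 2),
      aeval (R := ZMod 2) (fun i : Fin 3 =>
          ∑ j : Fin 3, C ((M : Matrix (Fin 3) (Fin 3) (ZMod 2)) i j) * X j)
        (X 0 ^ 2 * X 1 * X 2 + X 0 * X 1 ^ 2 * X 2 + X 0 * X 1 * X 2 ^ 2) -
      (X 0 ^ 2 * X 1 * X 2 + X 0 * X 1 ^ 2 * X 2 + X 0 * X 1 * X 2 ^ 2) ∈
        Submodule.span (ZMod 2)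
        ({X 0 ^ 4, X 1 ^ 4, X 2 ^ 4, X 0 ^ 2 * X 1 ^ 2, X 0 ^ 2 * X 2 ^ 2,
          X 1 ^ 2 * X 2 ^ 2} : Set (MvPolynomial (Fin 3) (ZMod 2)))) := by
  refine ⟨?_, ?_, ?_⟩
  · intro D hD
    simp only [Derivation.leibniz, hD, smul_eq_mul]
    ring
  · intro M p hp
    induction hp using Submodule.span_induction with
    | mem g hg =>
      simp only [Set.mem_insert_iff, Set.mem_singleton_iff] at hg
      rcases hg with rfl | rfl | rfl | rfl | rfl | rfl
      · simp only [map_pow, aeval_X, Fin.sum_univ_three]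
        exact lemA _ _ _
      · simp only [map_pow, aeval_X, Fin.sum_univ_three]
        exact lemA _ _ _
      · simp only [map_pow, aeval_X, Fin.sum_univ_three]
        exact lemA _ _ _
      · simp only [map_mul, map_pow, aeval_X, Fin.sum_univ_three]
        exact lemB _ _ _ _ _ _
      · simp only [map_mul, map_pow, aeval_X, Fin.sum_univ_three]
        exact lemB _ _ _ _ _ _
      · simp only [map_mul, map_pow, aeval_X, Fin.sum_univ_three]
        exact lemB _ _ _ _ _ _
    | zero => rw [map_zero]; exact zero_mem _
    | add x y hx hy ihx ihy => rw [map_add]; exact add_mem ihx ihy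
    | smul r x hx ih => rw [map_smul]; exact Submodule.smul_mem _ _ ih
  · intro M
    have hdet : (M : Matrix (Fin 3) (Fin 3) (ZMod 2)).det = 1 := by
      have h1 : IsUnit (M : Matrix (Fin 3) (Fin 3) (ZMod 2)).det :=
        (Matrix.isUnit_iff_isUnit_det _).mp M.isUnit
      have h2 : ∀ u : ZMod 2, IsUnit u → u = 1 := by
        intro u hu
        have := hu.ne_zero
        revert this
        revert u
        decide
      exact h2 _ h1
    rw [Matrix.det_fin_three] at hdet
    have hperm := permZ _ _ _ _ _ _ _ _ _ hdet
    have hs : aeval (R := ZMod 2) (fun i : Fin 3 =>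
          ∑ j : Fin 3, C ((M : Matrix (Fin 3) (Fin 3) (ZMod 2)) i j) * X j)
        (X 0 ^ 2 * X 1 * X 2 + X 0 * X 1 ^ 2 * X 2 + X 0 * X 1 * X 2 ^ 2) =
        (C ((M : Matrix (Fin 3) (Fin 3) (ZMod 2)) 0 0) * X 0 +
            C ((M : Matrix (Fin 3) (Fin 3) (ZMod 2)) 0 1) * X 1 +
            C ((M : Matrix (Fin 3) (Fin 3) (ZMod 2)) 0 2) * X 2) ^ 2 *
          (C ((M : Matrix (Fin 3) (Fin 3) (ZMod 2)) 1 0) * X 0 +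
            C ((M : Matrix (Fin 3) (Fin 3) (ZMod 2)) 1 1) * X 1 +
            C ((M : Matrix (Fin 3) (Fin 3) (ZMod 2)) 1 2) * X 2) *
          (C ((M : Matrix (Fin 3) (Fin 3) (ZMod 2)) 2 0) * X 0 +
            C ((M : Matrix (Fin 3) (Fin 3) (ZMod 2)) 2 1) * X 1 +
            C ((M : Matrix (Fin 3) (Fin 3) (ZMod 2)) 2 2) * X 2) +
        (C ((M : Matrix (Fin 3) (Fin 3) (ZMod 2)) 0 0) * X 0 +
            C ((M : Matrix (Fin 3) (Fin 3) (ZMod 2)) 0 1) * X 1 +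
            C ((M : Matrix (Fin 3) (Fin 3) (ZMod 2)) 0 2) * X 2) *
          (C ((M : Matrix (Fin 3) (Fin 3) (ZMod 2)) 1 0) * X 0 +
            C ((M : Matrix (Fin 3) (Fin 3) (ZMod 2)) 1 1) * X 1 +
            C ((M : Matrix (Fin 3) (Fin 3) (ZMod 2)) 1 2) * X 2) ^ 2 *
          (C ((M : Matrix (Fin 3) (Fin 3) (ZMod 2)) 2 0) * X 0 +
            C ((M : Matrix (Fin 3) (Fin 3) (ZMod 2)) 2 1) * X 1 +
            C ((M : Matrix (Fin 3) (Fin 3) (ZMod 2)) 2 2) * X 2) +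
        (C ((M : Matrix (Fin 3) (Fin 3) (ZMod 2)) 0 0) * X 0 +
            C ((M : Matrix (Fin 3) (Fin 3) (ZMod 2)) 0 1) * X 1 +
            C ((M : Matrix (Fin 3) (Fin 3) (ZMod 2)) 0 2) * X 2) *
          (C ((M : Matrix (Fin 3) (Fin 3) (ZMod 2)) 1 0) * X 0 +
            C ((M : Matrix (Fin 3) (Fin 3) (ZMod 2)) 1 1) * X 1 +
            C ((M : Matrix (Fin 3) (Fin 3) (ZMod 2)) 1 2) * X 2) *
          (C ((M : Matrix (Fin 3) (Fin 3) (ZMod 2)) 2 0) * X 0 +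
            C ((M : Matrix (Fin 3) (Fin 3) (ZMod 2)) 2 1) * X 1 +
            C ((M : Matrix (Fin 3) (Fin 3) (ZMod 2)) 2 2) * X 2) ^ 2 := by
      simp only [map_add, map_mul, map_pow, aeval_X, Fin.sum_univ_three]
    rw [hs]
    exact lem3 _ _ _ _ _ _ _ _ _ hperm
end

section
/- Under the action of Aut(ℤ/4 × ℤ/2) on the group ℤ/4⟨v²⟩ ⊕ ℤ/2⟨uv⟩ ⊕ ℤ/2⟨u²⟩ determined by ρ*u = u + v, ρ*v = 2u + v, σ*u = u, σ*v = 2u + v (extended multiplicatively, with 2v² = 2uv·v and relations 4v² = 2uv = 2u² = 0), the number of orbits is exactly 9. -/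
/- H⁴(ℤ/4 × ℤ/2, ℤ) ≅ ℤ/4 ⊕ ℤ/2 ⊕ ℤ/2, with the order-4 degree-2 class squaring to the
order-4 generator of H⁴, the product of the two degree-2 classes giving the order-2 class
`uv`, and the order-2 degree-2 class squaring to the remaining generator.  An element is
recorded as a triple `(a, b, c)` of coefficients.  The generators ρ, σ of
Aut(ℤ/4 × ℤ/2) act on degree-2 classes by ρ* : u ↦ u + v, v ↦ 2u + v and
σ* : u ↦ u, v ↦ 2u + v, and hence act on the degree-4 classes by multiplicative extension
(squaring the substituted expressions, with 2·uv = 0 and 2·(square of the order-2 class) = 0),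
which gives the explicit formulas `rhoStar` and `sigmaStar` below. -/

/-- The degree-4 cohomology group H⁴(ℤ/4 × ℤ/2, ℤ) ≅ ℤ/4 ⊕ ℤ/2 ⊕ ℤ/2. -/
abbrev H4Z4Z2 : Type := ZMod 4 × ZMod 2 × ZMod 2

/-- Action of ρ on degree-4 classes, by multiplicative extension of the action on degree 2. -/
def rhoStar : H4Z4Z2 → H4Z4Z2 :=
  fun p => (p.1 + 2 * (p.2.1.val : ZMod 4), p.2.1, (p.1.val : ZMod 2) + p.2.1 + p.2.2)

/-- Action of σ on degree-4 classes, by multiplicative extension of the action on degree 2. -/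
def sigmaStar : H4Z4Z2 → H4Z4Z2 :=
  fun p => (p.1 + 2 * (p.2.1.val : ZMod 4), p.2.1, p.2.2)

namespace OrbitCount

abbrev R : H4Z4Z2 → H4Z4Z2 → Prop := fun x y => y = rhoStar x ∨ y = sigmaStar x

/-- orbit representatives -/
def reps : Fin 9 → H4Z4Z2 :=
  ![(0,0,0), (0,0,1), (0,1,0), (1,0,0), (1,1,0), (1,1,1), (2,0,0), (2,0,1), (3,0,0)]

/-- orbit label of an element -/
def lbl : H4Z4Z2 → Fin 9 := fun x =>
  match x.1.val, x.2.1.val, x.2.2.val with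
  | 0, 0, 0 => 0
  | 0, 0, 1 => 1
  | 0, 1, _ => 2
  | 1, 0, _ => 3
  | 1, 1, 0 => 4
  | 1, 1, 1 => 5
  | 2, 0, 0 => 6
  | 2, 0, 1 => 7
  | 2, 1, _ => 2
  | 3, 0, _ => 8
  | 3, 1, 0 => 4
  | 3, 1, 1 => 5
  | _, _, _ => 0

lemma lbl_rho : ∀ x : H4Z4Z2, lbl (rhoStar x) = lbl x := by decide
lemma lbl_sigma : ∀ x : H4Z4Z2, lbl (sigmaStar x) = lbl x := by decide
lemma lbl_reps : ∀ i : Fin 9, lbl (reps i) = i := by decide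

lemma sR (x : H4Z4Z2) : Quot.mk R x = Quot.mk R (rhoStar x) := Quot.sound (Or.inl rfl)
lemma sS (x : H4Z4Z2) : Quot.mk R x = Quot.mk R (sigmaStar x) := Quot.sound (Or.inr rfl)

lemma key : ∀ x : H4Z4Z2, Quot.mk R x = Quot.mk R (reps (lbl x)) := by
  intro x
  fin_cases x <;>
  first
    | exact congrArg _ (by decide)
    | exact (sR _).trans (congrArg _ (by decide))
    | exact (sS _).trans (congrArg _ (by decide))
    | exact (sR _).trans ((sS _).trans (congrArg _ (by decide)))

def orbitEquiv : Quot R ≃ Fin 9 where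
  toFun := Quot.lift lbl (by
    rintro a b (rfl | rfl)
    · exact (lbl_rho a).symm
    · exact (lbl_sigma a).symm)
  invFun := fun i => Quot.mk R (reps i)
  left_inv := by
    intro q
    induction q using Quot.ind with
    | _ x => exact (key x).symm
  right_inv := fun i => by
    simpa using congrArg (fun (j : Fin 9) => j) (lbl_reps i)

end OrbitCount

/-- Under the action of Aut(ℤ/4 × ℤ/2) (generated by ρ and σ) on
H⁴(ℤ/4 × ℤ/2, ℤ) ≅ ℤ/4 ⊕ ℤ/2 ⊕ ℤ/2, the number of orbits is exactly 9. -/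
theorem card_orbits_H4_Z4xZ2 :
    Nat.card (Quot (fun x y : H4Z4Z2 => y = rhoStar x ∨ y = sigmaStar x)) = 9 := by
  rw [Nat.card_congr OrbitCount.orbitEquiv]
  simp
end
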